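/- Let χ be an (r+1)-signotope on [n] with a block partition [n] = C₁ ∪ ... ∪ C_r (where every element of C_i is less than every element of C_j whenever i < j). Then the induced grid orientation O_χ on the grid C₁ × ... × C_r is acyclic, where for vertices v, v' differing only in coordinate i with v_i = c < c' = v'_i, the edge is oriented v → v' if χ(v₁,...,v_{i-1}, c, c', v_{i+1},...,v_r) = + and v' → v otherwise. -/

import Mathlib

/-- Number of sign changes in a list of signs (`true` = `+`, `false` = `-`). -/
def signChanges (l : List Bool) : Nat :=
  (l.zip l.tail).countP (fun p => p.1 != p.2)

/-- The sequence of signs obtained from the set `A` by applying `χ` to `A` minus each of its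
elements, deleted in increasing order. -/
def delSeq (chi : Finset Nat -> Bool) (A : Finset Nat) : List Bool :=
  (List.range A.card).map (fun i => chi (((A.sort (fun a b => a <= b)).eraseIdx i).toFinset))

/-- `chi` is an `r`-signotope on ground set `S`: it is a sign map on `r`-subsets such that for
every `(r+1)`-subset `A ⊆ S` the sign sequence `delSeq chi A` has at most one sign change. -/
def IsSignotopeOn (r : Nat) (S : Finset Nat) (chi : Finset Nat -> Bool) : Prop :=
  forall A : Finset Nat, A ⊆ S -> A.card = r + 1 -> signChanges (delSeq chi A) <= 1
/-- `C 0, ..., C (r-1)` is a block partition of `[n] = {1, ..., n}`. -/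
def IsBlockPartition (n r : Nat) (C : Fin r -> Finset Nat) : Prop :=
  Finset.univ.biUnion C = Finset.Icc 1 n ∧
    ∀ i j : Fin r, i < j -> ∀ c ∈ C i, ∀ c' ∈ C j, c < c'

/-- The orientation `O_χ` induced by a block signotope: `blockDir chi C v w` means that both `v`
and `w` are grid vertices (of the grid `C 0 × ⋯ × C (r-1)`), they differ in exactly one
coordinate `i`, and the edge between them is directed from `v` to `w` according to the sign of
`chi` on the `(r+1)`-set consisting of all entries of `v` together with `w i`. -/
def blockDir {r : Nat} (chi : Finset Nat -> Bool) (C : Fin r -> Finset Nat)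
    (v w : Fin r -> Nat) : Prop :=
  (∀ j, v j ∈ C j) ∧ (∀ j, w j ∈ C j) ∧
    ∃ i, (∀ j, j ≠ i -> v j = w j) ∧
      ((v i < w i ∧ chi (insert (w i) (Finset.image v Finset.univ)) = true) ∨
       (w i < v i ∧ chi (insert (w i) (Finset.image v Finset.univ)) = false))

/-- Two tuples are adjacent in the grid iff they differ in exactly one coordinate. -/
def NatAdj {r : Nat} (v w : Fin r -> Nat) : Prop :=
  ∃ i, v i ≠ w i ∧ ∀ j, j ≠ i -> v j = w j

/-- `v` is a sink of the subgrid `S` of `O_χ`: all edges of the subgrid at `v` are incoming. -/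
def IsBlockSink {r : Nat} (chi : Finset Nat -> Bool) (C : Fin r -> Finset Nat)
    (S : Fin r -> Finset Nat) (v : Fin r -> Nat) : Prop :=
  (∀ i, v i ∈ S i) ∧ ∀ w, (∀ i, w i ∈ S i) -> NatAdj v w -> blockDir chi C w v

/-!
Induct on `r` and on the size of the last block. Let `N` be the largest element of the last block.
Split the grid into three layers: vertices whose last coordinate is `N`, and the remaining vertices
`v`, sorted by the sign of `χ(v ∪ {N})`. Edges never lead from the `-` layer to the `+` layer: if an
edge `u → w` changed `u_i = p` into `w_i = q`, then the deletion sequence of `A = u ∪ {q, N}` would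
read `+ - +` or `- + -` at its entries `p`, `q`, `N`. An edge between the `N` layer and another
vertex changes the last coordinate to or from `N`, so the orientation rule sends it from the `+`
layer into the `N` layer or from the `N` layer into the `-` layer. Hence a directed cycle stays
inside one layer. In the `N` layer it is a cycle of the grid of the first `r - 1` blocks for the
contraction `X ↦ χ(X ∪ {N})`, again a signotope; in the other two layers it is a cycle of the grid
where `N` is removed from the last block.
-/

open Finset Relation

lemma signChanges_cons_cons (x y : Bool) (l : List Bool) :
    signChanges (x :: y :: l) = signChanges (y :: l) + if x = y then 0 else 1 := by
  cases x <;> cases y <;> simp [signChanges]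

lemma signChanges_le_cons (x : Bool) (l : List Bool) : signChanges l ≤ signChanges (x :: l) := by
  cases l with
  | nil => simp [signChanges]
  | cons y l => rw [signChanges_cons_cons]; omega

lemma signChanges_cons_le_cons_cons (x y : Bool) (l : List Bool) :
    signChanges (x :: l) ≤ signChanges (x :: y :: l) := by
  cases l with
  | nil => simp [signChanges]
  | cons z l =>
    simp only [signChanges_cons_cons]
    cases x <;> cases y <;> cases z <;> simp <;> omega

lemma List.Sublist.signChanges_cons_le_cons {l₁ l₂ : List Bool} (h : l₁.Sublist l₂) (x : Bool) :
    signChanges (x :: l₁) ≤ signChanges (x :: l₂) := by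
  induction h generalizing x with
  | slnil => rfl
  | cons a _ ih => exact (ih x).trans (signChanges_cons_le_cons_cons x a _)
  | cons_cons a _ ih => simp only [signChanges_cons_cons]; have := ih a; omega

lemma List.Sublist.signChanges_le {l₁ l₂ : List Bool} (h : l₁.Sublist l₂) :
    signChanges l₁ ≤ signChanges l₂ := by
  induction h with
  | slnil => rfl
  | cons a _ ih => exact ih.trans (signChanges_le_cons a _)
  | cons_cons a h _ => exact h.signChanges_cons_le_cons a

lemma delSeq_eq_map (chi : Finset ℕ → Bool) (A : Finset ℕ) :
    delSeq chi A = (A.sort (· ≤ ·)).map fun a => chi (A.erase a) := by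
  refine List.ext_getElem (by simp [delSeq]) fun i _ hi => ?_
  have hnd := A.sort_nodup (· ≤ ·)
  simp only [delSeq, List.getElem_map, List.getElem_range]
  rw [List.length_map] at hi
  rw [← hnd.erase_getElem i hi]
  congr 1
  ext x
  simp [hnd.mem_erase_iff]

lemma sort_sublist_sort {A B : Finset ℕ} (h : A ⊆ B) : (A.sort (· ≤ ·)).Sublist (B.sort (· ≤ ·)) :=
  List.sublist_of_subperm_of_pairwise
    ((A.sort_nodup _).subperm fun x hx => by simpa using h (by simpa using hx))
    (A.pairwise_sort _) (B.pairwise_sort _)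

namespace IsSignotopeOn

variable {r : ℕ} {S : Finset ℕ} {chi : Finset ℕ → Bool}

lemma erase_mid_eq (hchi : IsSignotopeOn r S chi) {A : Finset ℕ} (hAS : A ⊆ S)
    (hA : A.card = r + 1) {a b c : ℕ} (ha : a ∈ A) (hb : b ∈ A) (hc : c ∈ A)
    (hab : a < b) (hbc : b < c) (hac : chi (A.erase a) = chi (A.erase c)) :
    chi (A.erase b) = chi (A.erase a) := by
  have hsub : [a, b, c].Sublist (A.sort (· ≤ ·)) :=
    List.sublist_of_subperm_of_pairwise
      (List.Nodup.subperm (by simp; omega) (by simp [ha, hb, hc]))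
      (by simp; omega) (A.pairwise_sort _)
  have h := (hsub.map fun x => chi (A.erase x)).signChanges_le
  rw [← delSeq_eq_map] at h
  have h1 := h.trans (hchi A hAS hA)
  simp only [List.map, signChanges_cons_cons, hac] at h1
  rw [hac]
  by_contra hne
  simp [hne, Ne.symm hne] at h1

lemma exchange (hchi : IsSignotopeOn r S chi) {A : Finset ℕ} (hAS : A ⊆ S)
    (hA : A.card = r + 1) {p q N : ℕ} (hp : p ∈ A) (hq : q ∈ A) (hN : N ∈ A)
    (hpN : p < N) (hqN : q < N) (hpq : p ≠ q) (hdir : chi (A.erase N) = decide (p < q))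
    (hqfalse : chi (A.erase q) = false) : chi (A.erase p) = false := by
  rcases hpq.lt_or_gt with hlt | hlt
  · by_contra hptrue
    have hac : chi (A.erase p) = chi (A.erase N) := by simp_all
    have := hchi.erase_mid_eq hAS hA hp hq hN hlt hqN hac
    simp_all
  · have hac : chi (A.erase q) = chi (A.erase N) := by simp [hdir, hqfalse, hlt.le]
    rw [hchi.erase_mid_eq hAS hA hq hp hN hlt hpN hac, hqfalse]

lemma contract (hchi : IsSignotopeOn (r + 1) S chi) {N : ℕ} (hN : N ∈ S) :
    IsSignotopeOn r (S.erase N) fun X => chi (insert N X) := by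
  intro A hAS hA
  have hNA : N ∉ A := fun h => by simpa using hAS h
  have hsub := (sort_sublist_sort (subset_insert N A)).map fun x => chi ((insert N A).erase x)
  have hseq : delSeq (fun X => chi (insert N X)) A =
      (A.sort (· ≤ ·)).map fun x => chi ((insert N A).erase x) := by
    rw [delSeq_eq_map]
    refine List.map_congr_left fun x hx => ?_
    rw [erase_insert_of_ne (by rintro rfl; exact hNA (by simpa using hx))]
  rw [hseq]
  refine hsub.signChanges_le.trans ?_
  rw [← delSeq_eq_map]
  exact hchi _ (insert_subset hN fun x hx => mem_of_mem_erase (hAS hx))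
    (by rw [card_insert_of_notMem hNA, hA])

end IsSignotopeOn

lemma Relation.TransGen.cycle_of_antitone {α β : Type*} [PartialOrder β] {R : α → α → Prop}
    (f : α → β) (hf : ∀ a b, R a b → f b ≤ f a) {v : α} (h : TransGen R v v) :
    TransGen (fun a b => R a b ∧ f a = f v ∧ f b = f v) v v := by
  have hle : ∀ {a b}, ReflTransGen R a b → f b ≤ f a := fun hab => by
    induction hab with
    | refl => rfl
    | tail _ hbc ih => exact (hf _ _ hbc).trans ih
  suffices key : ∀ b, TransGen R v b → ReflTransGen R b v →
      TransGen (fun a b => R a b ∧ f a = f v ∧ f b = f v) v b from key v h .refl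
  intro b hvb
  induction hvb with
  | single hvb =>
    intro hbv
    exact .single ⟨hvb, rfl, le_antisymm (hf _ _ hvb) (hle hbv)⟩
  | tail hva hab ih =>
    intro hbv
    have hav := ReflTransGen.head hab hbv
    have ha := le_antisymm (hle hva.to_reflTransGen) (hle hav)
    exact (ih hav).tail ⟨hab, ha, le_antisymm ((hf _ _ hab).trans ha.le) (hle hbv)⟩

def IsBlockOrdered {r : ℕ} (C : Fin r → Finset ℕ) : Prop :=
  ∀ i j : Fin r, i < j → ∀ c ∈ C i, ∀ c' ∈ C j, c < c'

namespace IsBlockOrdered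

variable {r : ℕ} {C : Fin r → Finset ℕ}

lemma mono {C' : Fin r → Finset ℕ} (hC : IsBlockOrdered C) (h : ∀ i, C' i ⊆ C i) :
    IsBlockOrdered C' :=
  fun i j hij c hc c' hc' => hC i j hij c (h i hc) c' (h j hc')

lemma init {C : Fin (r + 1) → Finset ℕ} (hC : IsBlockOrdered C) : IsBlockOrdered (Fin.init C) :=
  fun _ _ hij => hC _ _ (Fin.castSucc_lt_castSucc_iff.mpr hij)

lemma strictMono (hC : IsBlockOrdered C) {v : Fin r → ℕ} (hv : ∀ j, v j ∈ C j) : StrictMono v :=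
  fun i j hij => hC i j hij _ (hv i) _ (hv j)

lemma card_image (hC : IsBlockOrdered C) {v : Fin r → ℕ} (hv : ∀ j, v j ∈ C j) :
    (image v univ).card = r := by
  rw [card_image_of_injective _ (hC.strictMono hv).injective, card_univ, Fintype.card_fin]

lemma mem_image_iff (hC : IsBlockOrdered C) {v : Fin r → ℕ} (hv : ∀ j, v j ∈ C j) {i : Fin r}
    {x : ℕ} (hx : x ∈ C i) : x ∈ image v univ ↔ v i = x := by
  refine ⟨?_, fun h => mem_image.2 ⟨i, mem_univ _, h⟩⟩
  simp only [mem_image, mem_univ, true_and]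
  rintro ⟨j, rfl⟩
  rcases lt_trichotomy j i with hji | rfl | hij
  · exact absurd (hC j i hji _ (hv j) _ hx) (lt_irrefl _)
  · rfl
  · exact absurd (hC i j hij _ hx _ (hv j)) (lt_irrefl _)

end IsBlockOrdered

lemma insert_image_eq_insert_image {r : ℕ} {u w : Fin r → ℕ} {i : Fin r}
    (h : ∀ j, j ≠ i → u j = w j) :
    insert (w i) (image u univ) = insert (u i) (image w univ) := by
  have hsplit : ∀ v : Fin r → ℕ, image v univ = insert (v i) (image v (univ.erase i)) := fun v => by
    rw [← image_insert, insert_erase (mem_univ i)]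
  rw [hsplit u, hsplit w, image_congr fun j hj => h j (ne_of_mem_erase hj), insert_comm]

lemma image_eq_insert_last {r : ℕ} (a : Fin (r + 1) → ℕ) :
    image a univ = insert (a (Fin.last r)) (image (Fin.init a) univ) := by
  rw [Fin.univ_castSuccEmb, cons_eq_insert, image_insert, map_eq_image, image_image]
  rfl

lemma blockDir_iff {r : ℕ} {chi : Finset ℕ → Bool} {C : Fin r → Finset ℕ} {u w : Fin r → ℕ} :
    blockDir chi C u w ↔ (∀ j, u j ∈ C j) ∧ (∀ j, w j ∈ C j) ∧ ∃ i, (∀ j, j ≠ i → u j = w j) ∧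
      u i ≠ w i ∧ chi (insert (w i) (image u univ)) = decide (u i < w i) := by
  refine and_congr_right' (and_congr_right' (exists_congr fun i => and_congr_right' ?_))
  constructor
  · rintro (⟨hlt, h⟩ | ⟨hlt, h⟩)
    · exact ⟨hlt.ne, by simp [h, hlt]⟩
    · exact ⟨hlt.ne', by simp [h, hlt.le]⟩
  · rintro ⟨hne, h⟩
    rcases hne.lt_or_gt with hlt | hlt
    · exact .inl ⟨hlt, by simp [h, hlt]⟩
    · exact .inr ⟨hlt, by simp [h, hlt.le]⟩

section BlockGrid

variable {S : Finset ℕ} {chi : Finset ℕ → Bool} {N : ℕ}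

lemma chi_insert_eq_false_of_blockDir {r : ℕ} {C : Fin r → Finset ℕ} {u w : Fin r → ℕ}
    (hchi : IsSignotopeOn (r + 1) S chi) (hC : IsBlockOrdered C) (hCS : ∀ i, C i ⊆ S)
    (hN : N ∈ S) (huN : ∀ j, u j < N) (hwN : ∀ j, w j < N) (h : blockDir chi C u w)
    (hu_false : chi (insert N (image u univ)) = false) :
    chi (insert N (image w univ)) = false := by
  obtain ⟨hu, hw, i, hagree, hne, hdir⟩ := blockDir_iff.mp h
  have hNu : N ∉ image u univ := by simpa using fun j => (huN j).ne
  have hNw : N ∉ image w univ := by simpa using fun j => (hwN j).ne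
  have hwu : w i ∉ image u univ := by rwa [hC.mem_image_iff hu (hw i)]
  have huw : u i ∉ image w univ := by rwa [hC.mem_image_iff hw (hu i), eq_comm]
  set A := insert N (insert (w i) (image u univ)) with hA
  have hA' : A = insert N (insert (u i) (image w univ)) := by
    rw [hA, insert_image_eq_insert_image hagree]
  have hAS : A ⊆ S := by
    refine insert_subset hN (insert_subset (hCS i (hw i)) ?_)
    simpa [subset_iff] using fun j => hCS j (hu j)
  have hcard : A.card = r + 2 := by
    rw [hA, card_insert_of_notMem (by simp [hNu, (hwN i).ne']), card_insert_of_notMem hwu,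
      hC.card_image hu]
  have hN_erase : A.erase N = insert (w i) (image u univ) :=
    erase_insert (by simp [hNu, (hwN i).ne'])
  have hw_erase : A.erase (w i) = insert N (image u univ) := by
    rw [hA, insert_comm, erase_insert (by simp [hwu, (hwN i).ne])]
  have hu_erase : A.erase (u i) = insert N (image w univ) := by
    rw [hA', insert_comm, erase_insert (by simp [huw, (huN i).ne])]
  rw [← hu_erase]
  exact hchi.exchange hAS hcard (by simp [hA]) (by simp [hA]) (by simp [hA]) (huN i) (hwN i) hne
    (by rw [hN_erase, hdir]) (by rw [hw_erase, hu_false])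

variable {r : ℕ} {C : Fin (r + 1) → Finset ℕ}

def blockLevel (chi : Finset ℕ → Bool) (N : ℕ) (v : Fin (r + 1) → ℕ) : ℕ :=
  if v (Fin.last r) = N then 1 else if chi (insert N (image v univ)) then 2 else 0

lemma blockLevel_eq_one_iff {v : Fin (r + 1) → ℕ} :
    blockLevel chi N v = 1 ↔ v (Fin.last r) = N := by
  unfold blockLevel
  split_ifs <;> simp_all

lemma IsBlockOrdered.lt_of_last_ne (hC : IsBlockOrdered C) (hmax : ∀ c ∈ C (Fin.last r), c ≤ N)
    {v : Fin (r + 1) → ℕ} (hv : ∀ j, v j ∈ C j) (hvN : v (Fin.last r) ≠ N) (j : Fin (r + 1)) :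
    v j < N :=
  ((hC.strictMono hv).monotone (Fin.le_last j)).trans_lt ((hmax _ (hv _)).lt_of_ne hvN)

lemma blockLevel_le_of_blockDir (hchi : IsSignotopeOn (r + 2) S chi) (hC : IsBlockOrdered C)
    (hCS : ∀ i, C i ⊆ S) (hN : N ∈ S) (hmax : ∀ c ∈ C (Fin.last r), c ≤ N)
    {u w : Fin (r + 1) → ℕ} (h : blockDir chi C u w) : blockLevel chi N w ≤ blockLevel chi N u := by
  obtain ⟨hu, hw, i, hagree, -, hdir⟩ := blockDir_iff.mp h
  have hlast : u (Fin.last r) ≠ w (Fin.last r) → i = Fin.last r := fun hne =>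
    by_contra fun hi => hne (hagree _ (Ne.symm hi))
  by_cases huN : u (Fin.last r) = N <;> by_cases hwN : w (Fin.last r) = N
  · simp [blockLevel, huN, hwN]
  · obtain rfl := hlast (by rw [huN]; exact Ne.symm hwN)
    have hw_false : chi (insert N (image w univ)) = false := by
      rw [← huN, ← insert_image_eq_insert_image hagree, hdir, decide_eq_false_iff_not, not_lt,
        huN]
      exact hmax _ (hw _)
    simp [blockLevel, huN, hwN, hw_false]
  · obtain rfl := hlast (by rw [hwN]; exact huN)
    have hu_true : chi (insert N (image u univ)) = true := by
      rw [← hwN, hdir, decide_eq_true_iff, hwN]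
      exact (hmax _ (hu _)).lt_of_ne huN
    simp [blockLevel, huN, hwN, hu_true]
  · have hmono := chi_insert_eq_false_of_blockDir hchi hC hCS hN (hC.lt_of_last_ne hmax hu huN)
      (hC.lt_of_last_ne hmax hw hwN) h
    simp only [blockLevel, huN, hwN, if_false]
    cases hu_chi : chi (insert N (image u univ))
    · simp [hmono hu_chi]
    · simp only [if_true]
      split_ifs <;> simp

lemma blockDir_init {u w : Fin (r + 1) → ℕ} (hu : u (Fin.last r) = N)
    (hw : w (Fin.last r) = N) (h : blockDir chi C u w) :
    blockDir (fun X => chi (insert N X)) (Fin.init C) (Fin.init u) (Fin.init w) := by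
  obtain ⟨hu', hw', i, hagree, hne, hdir⟩ := blockDir_iff.mp h
  obtain ⟨i, rfl⟩ := Fin.exists_castSucc_eq.mpr
    (show i ≠ Fin.last r from fun hi => hne (by rw [hi, hu, hw]))
  refine blockDir_iff.mpr ⟨fun j => hu' _, fun j => hw' _, i,
    fun j hj => hagree _ (Fin.castSucc_injective _ |>.ne hj), hne, ?_⟩
  change chi (insert N (insert (w i.castSucc) (image (Fin.init u) univ))) = _
  rw [insert_comm, ← hu, ← image_eq_insert_last u]
  exact hdir

end BlockGrid

theorem blockDir_acyclic_of_subset {r : ℕ} {S : Finset ℕ} {chi : Finset ℕ → Bool}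
    {C : Fin r → Finset ℕ} (hchi : IsSignotopeOn (r + 1) S chi) (hC : IsBlockOrdered C)
    (hCS : ∀ i, C i ⊆ S) (v : Fin r → ℕ) : ¬ TransGen (blockDir chi C) v v := by
  induction r generalizing S chi with
  | zero =>
    intro hv
    obtain ⟨_, ⟨-, -, i, -⟩, -⟩ := TransGen.head'_iff.mp hv
    exact i.elim0
  | succ r ih =>
    induction hk : #(C (Fin.last r)) using Nat.strong_induction_on generalizing C v with
    | _ k ihk =>
    intro hv
    obtain ⟨_, ⟨hv', -⟩, -⟩ := TransGen.head'_iff.mp hv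
    set N := (C (Fin.last r)).max' ⟨_, hv' _⟩
    have hNC : N ∈ C (Fin.last r) := max'_mem _ _
    have hmax : ∀ c ∈ C (Fin.last r), c ≤ N := fun c hc => le_max' _ c hc
    have hlevel := hv.cycle_of_antitone (blockLevel chi N) fun _ _ h =>
      blockLevel_le_of_blockDir hchi hC hCS (hCS _ hNC) hmax h
    by_cases h1 : blockLevel chi N v = 1
    · refine ih (hchi.contract (hCS _ hNC)) hC.init (fun i c hc => mem_erase.2
        ⟨(hC _ _ (Fin.castSucc_lt_last i) c hc N hNC).ne, hCS _ hc⟩) (Fin.init v) ?_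
      refine hlevel.lift Fin.init fun a b ⟨h, ha, hb⟩ => blockDir_init ?_ ?_ h
      exacts [blockLevel_eq_one_iff.mp (ha.trans h1), blockLevel_eq_one_iff.mp (hb.trans h1)]
    · have hmem : ∀ a, (∀ j, a j ∈ C j) → blockLevel chi N a = blockLevel chi N v →
          ∀ j, a j ∈ (C j).erase N := fun a ha hav j => mem_erase.2
        ⟨(hC.lt_of_last_ne hmax ha (fun h => h1 (hav ▸ blockLevel_eq_one_iff.mpr h)) j).ne, ha j⟩
      refine ihk _ (hk ▸ card_erase_lt_of_mem hNC) (hC.mono fun _ => erase_subset _ _)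
        (fun i => (erase_subset _ _).trans (hCS i)) v rfl ?_
      exact TransGen.mono (fun a b ⟨h, ha, hb⟩ => ⟨hmem a h.1 ha, hmem b h.2.1 hb, h.2.2⟩)
        _ _ hlevel

/-- the grid orientation `O_χ` induced by an `(r+1)`-signotope with a block
partition `[n] = C 0 ∪ ⋯ ∪ C (r-1)` is acyclic. -/
theorem blockDir_acyclic (n r : Nat) (chi : Finset Nat -> Bool) (C : Fin r -> Finset Nat)
    (hchi : IsSignotopeOn (r + 1) (Finset.Icc 1 n) chi) (hC : IsBlockPartition n r C) :
    ∀ v : Fin r -> Nat, ¬ Relation.TransGen (blockDir chi C) v v :=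
  blockDir_acyclic_of_subset hchi hC.2 fun i _ hc => hC.1 ▸ mem_biUnion.2 ⟨i, mem_univ _, hc⟩
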